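/- Let C > 0 and let V : ℝ → ℝ be twice continuously differentiable with V(ξ) < C for all ξ, satisfying the solitary-wave profile equation C V''(ξ) = C V(ξ) − V(ξ)/(C − V(ξ)) − (1/2) V(ξ)² for all ξ, and with V(ξ) → 0 and V'(ξ) → 0 as ξ → −∞. If ξ₀ ∈ ℝ is a critical point of V, i.e. V'(ξ₀) = 0, and m := V(ξ₀), then m satisfies the amplitude equation (C/2) m² + m + C · log(1 − m/C) = (1/6) m³. -/

import Mathlib

/-!
The energy `E(v, w) = (C/2)(w² - v²) + v³/6 - v - C log(1 - v/C)` satisfies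
`d/dξ E(V, V') = V' · (C V'' - (C V - V/(C - V) - V²/2))`, so it is constant along a solution
of the profile equation. Since `E` is continuous at `(0, 0)` with `E(0, 0) = 0` and `(V, V') → 0`
at `-∞`, the constant is `0`; at a critical point `V' = 0` this is the amplitude equation.
-/

open Filter Topology

noncomputable def solitaryEnergy (C v w : ℝ) : ℝ :=
  C / 2 * (w ^ 2 - v ^ 2) + 1 / 6 * v ^ 3 - v - C * Real.log (1 - v / C)

@[simp]
lemma solitaryEnergy_zero_zero (C : ℝ) : solitaryEnergy C 0 0 = 0 := by
  simp [solitaryEnergy]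

lemma hasDerivAt_solitaryEnergy {C : ℝ} (hC : C ≠ 0) {u w : ℝ → ℝ} {w' x : ℝ}
    (hux : u x ≠ C) (hu : HasDerivAt u (w x) x) (hw : HasDerivAt w w' x) :
    HasDerivAt (fun y => solitaryEnergy C (u y) (w y))
      (w x * (C * w' - (C * u x - u x / (C - u x) - (1 / 2) * u x ^ 2))) x := by
  have hCu : C - u x ≠ 0 := sub_ne_zero.mpr hux.symm
  have hlog_arg : 1 - u x / C ≠ 0 := by
    rwa [one_sub_div hC, div_ne_zero_iff, and_iff_left hC]
  have hlog := ((hasDerivAt_const x (1 : ℝ)).fun_sub (hu.div_const C)).log hlog_arg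
  unfold solitaryEnergy
  refine (((((hw.fun_pow 2).fun_sub (hu.fun_pow 2)).const_mul (C / 2)).fun_add
    ((hu.fun_pow 3).const_mul (1 / 6))).fun_sub hu |>.fun_sub (hlog.const_mul C)).congr_deriv ?_
  field_simp
  ring

lemma eq_of_hasDerivAt_zero_of_tendsto_atBot {E : Type*} [NormedAddCommGroup E]
    [NormedSpace ℝ E] {f : ℝ → E} {a : E} (hf : ∀ x, HasDerivAt f 0 x)
    (hlim : Tendsto f atBot (𝓝 a)) (x : ℝ) : f x = a := by
  have hconst : f = fun _ => f x := funext fun y =>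
    is_const_of_deriv_eq_zero (fun z => (hf z).differentiableAt) (fun z => (hf z).deriv) y x
  rw [hconst] at hlim
  exact tendsto_nhds_unique tendsto_const_nhds hlim

lemma tendsto_solitaryEnergy_zero {α : Type*} {l : Filter α} (C : ℝ) {u w : α → ℝ}
    (hu : Tendsto u l (𝓝 0)) (hw : Tendsto w l (𝓝 0)) :
    Tendsto (fun y => solitaryEnergy C (u y) (w y)) l (𝓝 0) := by
  have hcont : ContinuousAt (fun p : ℝ × ℝ => solitaryEnergy C p.1 p.2) (0, 0) := by
    unfold solitaryEnergy
    fun_prop (disch := norm_num)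
  have h := hcont.tendsto.comp (hu.prodMk_nhds hw)
  rwa [solitaryEnergy_zero_zero] at h

/-- The amplitude equation at a critical point of the solitary-wave profile:
if `V` solves `C V'' = C V - V/(C - V) - (1/2) V²` with `V, V' → 0` at `-∞`,
`V < C`, and `V'(ξ₀) = 0`, then `m = V(ξ₀)` satisfies
`(C/2) m² + m + C log(1 - m/C) = (1/6) m³`. -/
theorem amick_schonbek_amplitude_equation
    (C : ℝ) (hC : 0 < C) (V : ℝ → ℝ) (hV : ContDiff ℝ 2 V)
    (hlt : ∀ ξ : ℝ, V ξ < C)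
    (ode : ∀ ξ : ℝ,
      C * deriv (deriv V) ξ
        = C * V ξ - V ξ / (C - V ξ) - (1 / 2) * (V ξ) ^ 2)
    (hV0 : Tendsto V atBot (nhds 0))
    (hV'0 : Tendsto (deriv V) atBot (nhds 0))
    (ξ₀ : ℝ) (hcrit : deriv V ξ₀ = 0)
    (m : ℝ) (hm : m = V ξ₀) :
    (C / 2) * m ^ 2 + m + C * Real.log (1 - m / C) = (1 / 6) * m ^ 3 := by
  have hV' : Differentiable ℝ (deriv V) :=
    (hV.iterate_deriv' 1 1).differentiable one_ne_zero
  have hconserved (ξ : ℝ) : HasDerivAt (fun y => solitaryEnergy C (V y) (deriv V y)) 0 ξ := by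
    have h := hasDerivAt_solitaryEnergy hC.ne' (hlt ξ).ne
      ((hV.differentiable two_ne_zero ξ).hasDerivAt) (hV' ξ).hasDerivAt
    rwa [ode, sub_self, mul_zero] at h
  have hzero := eq_of_hasDerivAt_zero_of_tendsto_atBot hconserved
    (tendsto_solitaryEnergy_zero C hV0 hV'0) ξ₀
  rw [solitaryEnergy, hcrit, ← hm] at hzero
  linarith
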